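/- Let p be a prime, H_p the Heisenberg group over ZMod p, L its subgroup of matrices [[1,0,c],[0,1,b],[0,0,1]] (a 'Lagrangian' subgroup), χ a nontrivial character of ZMod p, and χ̃ the character of L given by χ̃([[1,0,c],[0,1,b],[0,0,1]]) = χ(c). Then the induced representation Ind_L^{H_p}(χ̃) is an irreducible complex representation of H_p of dimension p. -/

import Mathlib

/-!
A function in the induced space is determined by its values on the coset representatives
`heisElem p a 0 0` of `Lag p`, so the space has dimension `p`. In these coordinates
`heisElem p α β γ` acts by `v ↦ (a ↦ χ(γ + aβ) v(a + α))`, whose trace vanishes unless `α = 0`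
and is then `χ(γ) ∑ₐ χ(aβ)`, which vanishes unless `β = 0` because `χ` is nontrivial. So the
induced character is `p χ(γ)` on the centre and `0` elsewhere, hence
`∑_g χ_Ind(g) χ_Ind(g⁻¹) = p · p² = |H_p|`, and a character of norm one is irreducible.
-/

open Matrix

/-- The matrix [[1,a,c],[0,1,b],[0,0,1]]. -/
def heisMat (p : ℕ) (a b c : ZMod p) : Matrix (Fin 3) (Fin 3) (ZMod p) :=
  !![1, a, c; 0, 1, b; 0, 0, 1]

theorem heisMat_mul (p : ℕ) (a b c a' b' c' : ZMod p) :
    heisMat p a b c * heisMat p a' b' c' = heisMat p (a + a') (b + b') (c + c' + a * b') := by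
  ext i j
  fin_cases i <;> fin_cases j <;>
    simp [heisMat, Matrix.mul_apply, Fin.sum_univ_three, Matrix.vecHead, Matrix.vecTail] <;> ring

theorem heisMat_inv_val (p : ℕ) (x : GL (Fin 3) (ZMod p)) (a b c : ZMod p)
    (hx : (x : Matrix (Fin 3) (Fin 3) (ZMod p)) = heisMat p a b c) :
    ((x⁻¹ : GL (Fin 3) (ZMod p)) : Matrix (Fin 3) (Fin 3) (ZMod p)) =
      heisMat p (-a) (-b) (a * b - c) := by
  have h1 : (x : Matrix (Fin 3) (Fin 3) (ZMod p)) * heisMat p (-a) (-b) (a * b - c) = 1 := by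
    rw [hx, heisMat_mul]
    ext i j
    fin_cases i <;> fin_cases j <;>
      simp [heisMat, Matrix.one_apply, Matrix.vecHead, Matrix.vecTail] <;> ring
  calc ((x⁻¹ : GL (Fin 3) (ZMod p)) : Matrix (Fin 3) (Fin 3) (ZMod p))
      = ↑x⁻¹ * 1 := by rw [mul_one]
    _ = ↑x⁻¹ * (↑x * heisMat p (-a) (-b) (a * b - c)) := by rw [h1]
    _ = (↑x⁻¹ * ↑x) * heisMat p (-a) (-b) (a * b - c) := by rw [mul_assoc]
    _ = heisMat p (-a) (-b) (a * b - c) := by rw [Units.inv_mul, one_mul]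

/-- The Heisenberg group mod `p`, as a subgroup of `GL₃(ZMod p)`. -/
def Heis (p : ℕ) : Subgroup (GL (Fin 3) (ZMod p)) where
  carrier := {g | ∃ a b c : ZMod p,
    (g : Matrix (Fin 3) (Fin 3) (ZMod p)) = heisMat p a b c}
  one_mem' := ⟨0, 0, 0, by simp [heisMat, Matrix.one_fin_three]⟩
  mul_mem' := by
    rintro x y ⟨a, b, c, hx⟩ ⟨a', b', c', hy⟩
    exact ⟨a + a', b + b', c + c' + a * b', by rw [Units.val_mul, hx, hy, heisMat_mul]⟩
  inv_mem' := by
    rintro x ⟨a, b, c, hx⟩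
    exact ⟨-a, -b, a * b - c, heisMat_inv_val p x a b c hx⟩

/-- The Lagrangian subgroup of the Heisenberg group consisting of the matrices
`[[1,0,c],[0,1,b],[0,0,1]]`. -/
def Lag (p : ℕ) : Subgroup ↥(Heis p) where
  carrier := {g | ((g : GL (Fin 3) (ZMod p)) : Matrix (Fin 3) (Fin 3) (ZMod p)) 0 1 = 0}
  one_mem' := by
    show ((((1 : ↥(Heis p)) : GL (Fin 3) (ZMod p))) : Matrix (Fin 3) (Fin 3) (ZMod p)) 0 1 = 0
    simp [Matrix.one_apply]
  mul_mem' := by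
    intro x y hx hy
    obtain ⟨a, b, c, hxm⟩ := x.2
    obtain ⟨a', b', c', hym⟩ := y.2
    have ha : a = 0 := by
      have := hx
      simp only [Set.mem_setOf_eq] at this
      rw [hxm] at this
      simpa [heisMat] using this
    have ha' : a' = 0 := by
      have := hy
      simp only [Set.mem_setOf_eq] at this
      rw [hym] at this
      simpa [heisMat] using this
    show ((((x * y : ↥(Heis p)) : GL (Fin 3) (ZMod p))) : Matrix (Fin 3) (Fin 3) (ZMod p)) 0 1 = 0
    rw [Subgroup.coe_mul, Units.val_mul, hxm, hym, heisMat_mul]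
    simp [heisMat, ha, ha']
  inv_mem' := by
    intro x hx
    obtain ⟨a, b, c, hxm⟩ := x.2
    have ha : a = 0 := by
      have := hx
      simp only [Set.mem_setOf_eq] at this
      rw [hxm] at this
      simpa [heisMat] using this
    show ((((x⁻¹ : ↥(Heis p)) : GL (Fin 3) (ZMod p))) : Matrix (Fin 3) (Fin 3) (ZMod p)) 0 1 = 0
    rw [show ((x⁻¹ : ↥(Heis p)) : GL (Fin 3) (ZMod p)) = (x : GL (Fin 3) (ZMod p))⁻¹ from rfl,
      heisMat_inv_val p _ a b c hxm]
    simp [heisMat, ha]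

/-- The space of the representation of the Heisenberg group induced from a character
`χt` of the Lagrangian subgroup: functions `f : H_p → ℂ` with `f(l·h) = χt(l)·f(h)`. -/
noncomputable def indCarrier (p : ℕ) (χt : ↥(Lag p) →* ℂˣ) : Submodule ℂ (↥(Heis p) → ℂ) where
  carrier := {f | ∀ (l : ↥(Lag p)) (h : ↥(Heis p)), f (↑l * h) = (χt l : ℂ) * f h}
  add_mem' := by
    intro f g hf hg l h
    simp only [Pi.add_apply, hf l h, hg l h]
    ring
  zero_mem' := by intro l h; simp
  smul_mem' := by
    intro c f hf l h
    simp only [Pi.smul_apply, smul_eq_mul, hf l h]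
    ring

/-- The representation of the Heisenberg group induced from a character `χt` of the
Lagrangian subgroup, acting by right translation. -/
noncomputable def indRep (p : ℕ) (χt : ↥(Lag p) →* ℂˣ) :
    Representation ℂ ↥(Heis p) ↥(indCarrier p χt) where
  toFun g :=
    { toFun := fun f => ⟨fun h => (f : ↥(Heis p) → ℂ) (h * g), by
        intro l h
        show (f : ↥(Heis p) → ℂ) ((↑l * h) * g) = (χt l : ℂ) * (f : ↥(Heis p) → ℂ) (h * g)
        rw [mul_assoc]
        exact f.2 l (h * g)⟩
      map_add' := by intro f g; apply Subtype.ext; funext h; simp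
      map_smul' := by intro c f; apply Subtype.ext; funext h; simp }
  map_one' := by
    apply LinearMap.ext; intro f; apply Subtype.ext; funext h; simp
  map_mul' := by
    intro g₁ g₂
    apply LinearMap.ext; intro f; apply Subtype.ext; funext h
    show (f : ↥(Heis p) → ℂ) (h * (g₁ * g₂)) = (f : ↥(Heis p) → ℂ) ((h * g₁) * g₂)
    rw [mul_assoc]

open CategoryTheory

theorem sum_apply_ofAdd_mul {F R : Type*} [Field F] [Fintype F] [DecidableEq F] [CommRing R]
    [IsDomain R] (ψ : Multiplicative F →* Rˣ) (hψ : ψ ≠ 1) (β : F) :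
    ∑ a : F, (ψ (Multiplicative.ofAdd (a * β)) : R) =
      if β = 0 then (Fintype.card F : R) else 0 := by
  split_ifs with hβ
  · simp [hβ]
  · have hψ' : (Units.coeHom R).comp ψ ≠ 1 := fun h =>
      hψ <| MonoidHom.ext fun x => Units.ext <| by simpa using DFunLike.congr_fun h x
    rw [← sum_hom_units_eq_zero _ hψ']
    exact Fintype.sum_equiv ((Equiv.mulRight₀ β hβ).trans Multiplicative.ofAdd) _ _ fun _ => rfl

theorem LinearMap.trace_eq_sum_apply_single {R ι : Type*} [CommRing R] [Fintype ι]
    [DecidableEq ι] (T : (ι → R) →ₗ[R] ι → R) :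
    LinearMap.trace R _ T = ∑ i, T (Pi.single i 1) i := by
  rw [LinearMap.trace_eq_matrix_trace R (Pi.basisFun R ι), Matrix.trace]
  simp

section Heisenberg

variable {p : ℕ}

theorem heisMat_zero : heisMat p 0 0 0 = 1 := by
  simp [heisMat, Matrix.one_fin_three]

def heisElem (p : ℕ) (a b c : ZMod p) : Heis p :=
  ⟨⟨heisMat p a b c, heisMat p (-a) (-b) (a * b - c),
    by rw [heisMat_mul, ← heisMat_zero]; congr 1 <;> ring,
    by rw [heisMat_mul, ← heisMat_zero]; congr 1 <;> ring⟩, a, b, c, rfl⟩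

theorem heisElem_mul (a b c a' b' c' : ZMod p) :
    heisElem p a b c * heisElem p a' b' c' = heisElem p (a + a') (b + b') (c + c' + a * b') :=
  Subtype.ext <| Units.ext <| heisMat_mul p a b c a' b' c'

theorem heisElem_zero : heisElem p 0 0 0 = 1 :=
  Subtype.ext <| Units.ext heisMat_zero

theorem heisElem_inv (a b c : ZMod p) :
    (heisElem p a b c)⁻¹ = heisElem p (-a) (-b) (a * b - c) := by
  refine inv_eq_of_mul_eq_one_right ?_
  rw [heisElem_mul, ← heisElem_zero]
  congr 1 <;> ring

def heisEquiv (p : ℕ) : ZMod p × ZMod p × ZMod p ≃ Heis p where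
  toFun x := heisElem p x.1 x.2.1 x.2.2
  invFun h :=
    let m : Matrix (Fin 3) (Fin 3) (ZMod p) := (h : GL (Fin 3) (ZMod p))
    (m 0 1, m 1 2, m 0 2)
  left_inv x := by simp [heisElem, heisMat]
  right_inv h := by
    obtain ⟨a, b, c, hh⟩ := h.2
    exact Subtype.ext <| Units.ext <| by simp [heisElem, hh, heisMat]

theorem card_heis [NeZero p] : Nat.card (Heis p) = p ^ 3 := by
  rw [← Nat.card_congr (heisEquiv p), Nat.card_prod, Nat.card_prod, Nat.card_zmod]
  ring

theorem heisElem_mem_lag (b c : ZMod p) : heisElem p 0 b c ∈ Lag p := by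
  simp [Lag, heisElem, heisMat]

def lagElem (p : ℕ) (b c : ZMod p) : Lag p := ⟨heisElem p 0 b c, heisElem_mem_lag b c⟩

theorem exists_lagElem_eq (l : Lag p) : ∃ b c, l = lagElem p b c := by
  obtain ⟨⟨a, b, c⟩, hl⟩ := (heisEquiv p).surjective l
  have ha : a = 0 := by simpa [← hl, Lag, heisEquiv, heisElem, heisMat] using l.2
  exact ⟨b, c, Subtype.ext (by rw [← hl, ha]; rfl)⟩

theorem exists_heisElem_eq (h : Heis p) : ∃ a b c, h = heisElem p a b c := by
  obtain ⟨⟨a, b, c⟩, rfl⟩ := (heisEquiv p).surjective h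
  exact ⟨a, b, c, rfl⟩

@[simp]
theorem heisEquiv_symm_heisElem (a b c : ZMod p) :
    (heisEquiv p).symm (heisElem p a b c) = (a, b, c) :=
  (heisEquiv p).symm_apply_apply (a, b, c)

section Induced

variable (χ : Multiplicative (ZMod p) →* ℂˣ) {χt : Lag p →* ℂˣ}
  (hχt : ∀ (l : ↥(Lag p)) (b c : ZMod p),
    (((l : ↥(Heis p)) : GL (Fin 3) (ZMod p)) : Matrix (Fin 3) (Fin 3) (ZMod p)) =
      heisMat p 0 b c → χt l = χ (Multiplicative.ofAdd c))
include hχt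

theorem apply_heisElem_of_mem_indCarrier {f : Heis p → ℂ} (hf : f ∈ indCarrier p χt)
    (a b c : ZMod p) :
    f (heisElem p a b c) = χ (Multiplicative.ofAdd c) * f (heisElem p a 0 0) := by
  have hmul : (lagElem p b c : Heis p) * heisElem p a 0 0 = heisElem p a b c := by
    rw [lagElem, heisElem_mul]; congr 1 <;> ring
  rw [← hmul, hf, hχt _ b c rfl]

noncomputable def indCoord : indCarrier p χt ≃ₗ[ℂ] (ZMod p → ℂ) where
  toFun f a := (f : Heis p → ℂ) (heisElem p a 0 0)
  map_add' _ _ := rfl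
  map_smul' _ _ := rfl
  invFun v := ⟨fun h =>
      χ (Multiplicative.ofAdd ((heisEquiv p).symm h).2.2) * v ((heisEquiv p).symm h).1, by
    intro l h
    obtain ⟨b', c', rfl⟩ := exists_lagElem_eq l
    obtain ⟨a, b, c, rfl⟩ := exists_heisElem_eq h
    have hmul :
        (lagElem p b' c' : Heis p) * heisElem p a b c = heisElem p a (b' + b) (c' + c) := by
      rw [lagElem, heisElem_mul]; congr 1 <;> ring
    simp only [hmul, heisEquiv_symm_heisElem, hχt (lagElem p b' c') b' c' rfl, ofAdd_add, map_mul,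
      Units.val_mul]
    ring⟩
  left_inv f := by
    ext1; funext h
    obtain ⟨a, b, c, rfl⟩ := exists_heisElem_eq h
    simpa using (apply_heisElem_of_mem_indCarrier χ hχt f.2 a b c).symm
  right_inv v := by
    funext a
    simp

theorem finrank_indCarrier [NeZero p] : Module.finrank ℂ (indCarrier p χt) = p := by
  rw [(indCoord χ hχt).finrank_eq, Module.finrank_pi, ZMod.card]

theorem indCoord_indRep_heisElem (f : indCarrier p χt) (α β γ a : ZMod p) :
    indCoord χ hχt (indRep p χt (heisElem p α β γ) f) a =
      χ (Multiplicative.ofAdd (γ + a * β)) * indCoord χ hχt f (a + α) := by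
  change (f : Heis p → ℂ) (heisElem p a 0 0 * heisElem p α β γ) = _
  rw [heisElem_mul, apply_heisElem_of_mem_indCarrier χ hχt f.2]
  simp [indCoord]

theorem trace_indRep_heisElem [NeZero p] (α β γ : ZMod p) :
    LinearMap.trace ℂ _ (indRep p χt (heisElem p α β γ)) =
      if α = 0 then
        χ (Multiplicative.ofAdd γ) * ∑ a, (χ (Multiplicative.ofAdd (a * β)) : ℂ)
      else 0 := by
  classical
  rw [← LinearMap.trace_conj' _ (indCoord χ hχt), LinearMap.trace_eq_sum_apply_single]
  simp [LinearEquiv.conj_apply, indCoord_indRep_heisElem, Pi.single_apply, Finset.mul_sum]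

theorem character_indRep_heisElem [Fact p.Prime] (hχ : χ ≠ 1) (α β γ : ZMod p) :
    (FDRep.of (indRep p χt)).character (heisElem p α β γ) =
      if α = 0 ∧ β = 0 then (p : ℂ) * χ (Multiplicative.ofAdd γ) else 0 := by
  rw [FDRep.character, FDRep.of_ρ', trace_indRep_heisElem χ hχt, sum_apply_ofAdd_mul χ hχ,
    ZMod.card]
  by_cases hα : α = 0 <;> by_cases hβ : β = 0 <;> simp [hα, hβ, mul_comm]

theorem character_mul_character_inv_heisElem [Fact p.Prime] (hχ : χ ≠ 1) (α β γ : ZMod p) :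
    (FDRep.of (indRep p χt)).character (heisElem p α β γ) *
        (FDRep.of (indRep p χt)).character (heisElem p α β γ)⁻¹ =
      if α = 0 ∧ β = 0 then (p : ℂ) ^ 2 else 0 := by
  rw [heisElem_inv, character_indRep_heisElem χ hχt hχ, character_indRep_heisElem χ hχt hχ]
  by_cases h : α = 0 ∧ β = 0
  · obtain ⟨rfl, rfl⟩ := h
    have hχγ := Units.ne_zero (χ (Multiplicative.ofAdd γ))
    simp only [and_self, if_true, neg_zero, mul_zero, zero_sub, ofAdd_neg, map_inv,
      Units.val_inv_eq_inv_val]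
    field_simp
  · simp [h]

theorem sum_character_mul_character_inv [Fact p.Prime] [Fintype (Heis p)] (hχ : χ ≠ 1) :
    ∑ g : Heis p,
        (FDRep.of (indRep p χt)).character g * (FDRep.of (indRep p χt)).character g⁻¹ =
      p ^ 3 := by
  rw [← (heisEquiv p).sum_comp]
  -- Two passes: the projections must be reduced before the `if` is introduced, or its
  -- `Decidable` instance keeps depending on the summation variable and the sums do not collapse.
  simp only [Fintype.sum_prod_type, heisEquiv, Equiv.coe_fn_mk]
  simp only [character_mul_character_inv_heisElem χ hχt hχ]
  simp [ite_and, Finset.sum_ite_eq', ZMod.card]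
  ring

end Induced

end Heisenberg

/-- The representation of the Heisenberg group `H_p` induced from the character
`χ̃ : [[1,0,c],[0,1,b],[0,0,1]] ↦ χ(c)` of the Lagrangian subgroup, with `χ` a nontrivial
character of `ZMod p`, is irreducible of dimension `p`. -/
theorem induced_from_lagrangian_irreducible (p : ℕ) [Fact p.Prime]
    (χ : Multiplicative (ZMod p) →* ℂˣ) (hχ : χ ≠ 1)
    (χt : ↥(Lag p) →* ℂˣ)
    (hχt : ∀ (l : ↥(Lag p)) (b c : ZMod p),
      (((l : ↥(Heis p)) : GL (Fin 3) (ZMod p)) : Matrix (Fin 3) (Fin 3) (ZMod p)) =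
        heisMat p 0 b c → χt l = χ (Multiplicative.ofAdd c)) :
    Simple (FDRep.of (indRep p χt)) ∧ Module.finrank ℂ ↥(indCarrier p χt) = p := by
  have := Fintype.ofFinite (Heis p)
  refine ⟨(FDRep.simple_iff_char_is_norm_one _).mpr ?_, finrank_indCarrier χ hχt⟩
  rw [sum_character_mul_character_inv χ hχt hχ, card_heis, Nat.cast_pow]
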